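/- Let W ~ Exp(δ) and V ~ Exp(β) be independent, let t > 0, and set D := min{t, W}. Then E[min{0, V − min{X, D}}] for any fixed X ≥ 0 equals ∫_{ℝ₊²} βδ e^{−βx − δy}·min{0, x − min{X, y}} d(x,y) = −β/(δ(β+δ)) + O(e^{−δX}) as X → ∞. -/

import Mathlib

/-!
By Fubini, integrate first in `x`: for `m ≥ 0`,
`∫_{x>0} β e^{-βx} min{0, x - m} dx = (1 - e^{-βm})/β - m`.
Integrating this against the `Exp(δ)` density at `m = min{X, y}` splits at `y = X` and gives the
closed form `-β/(δ(β+δ)) + e^{-δX}/δ - e^{-(β+δ)X}/(β+δ)`, whose last two terms lie in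
`[0, e^{-δX}/δ]`.
-/

open MeasureTheory Real Set

lemma hasDerivAt_exp_neg_mul (c x : ℝ) :
    HasDerivAt (fun y ↦ exp (-c * y)) (-c * exp (-c * x)) x := by
  simpa [mul_comm] using ((hasDerivAt_id x).const_mul (-c)).exp

lemma integral_Ioi_mul_exp_neg_mul {c : ℝ} (hc : 0 < c) (a : ℝ) :
    ∫ y in Ioi a, c * exp (-c * y) = exp (-c * a) := by
  rw [integral_const_mul, integral_exp_mul_Ioi (neg_lt_zero.mpr hc)]
  field_simp

lemma integral_Ioi_exp_mul_comp_min {δ X : ℝ} {g : ℝ → ℝ} (hδ : 0 < δ) (hX : 0 ≤ X)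
    (hg : Continuous g) :
    ∫ y in Ioi 0, δ * exp (-δ * y) * g (min X y)
      = (∫ y in 0..X, δ * exp (-δ * y) * g y) + exp (-δ * X) * g X := by
  have h_tail : EqOn (fun y ↦ δ * exp (-δ * y) * g (min X y)) (fun y ↦ δ * exp (-δ * y) * g X)
      (Ioi X) := fun y hy ↦ by simp [min_eq_left (le_of_lt (mem_Ioi.mp hy))]
  have h_head : EqOn (fun y ↦ δ * exp (-δ * y) * g (min X y)) (fun y ↦ δ * exp (-δ * y) * g y)
      (Ioc 0 X) := fun y hy ↦ by simp [min_eq_right hy.2]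
  have h_int_tail : IntegrableOn (fun y ↦ δ * exp (-δ * y) * g (min X y)) (Ioi X) :=
    IntegrableOn.congr_fun (((exp_neg_integrableOn_Ioi X hδ).const_mul δ).mul_const (g X))
      h_tail.symm measurableSet_Ioi
  rw [← Ioc_union_Ioi_eq_Ioi hX, setIntegral_union (Ioc_disjoint_Ioi le_rfl) measurableSet_Ioi
    (by fun_prop : Continuous _).integrableOn_Ioc h_int_tail,
    setIntegral_congr_fun measurableSet_Ioc h_head, setIntegral_congr_fun measurableSet_Ioi h_tail,
    integral_mul_const, integral_Ioi_mul_exp_neg_mul hδ, intervalIntegral.integral_of_le hX]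

lemma integral_Ioi_exp_mul_min_zero_sub {β m : ℝ} (hβ : β ≠ 0) (hm : 0 ≤ m) :
    ∫ x in Ioi 0, β * exp (-β * x) * min 0 (x - m) = (1 - exp (-β * m)) / β - m := by
  have h_vanish : ∀ x ∈ Ioi (0 : ℝ) \ Ioc 0 m, β * exp (-β * x) * min 0 (x - m) = 0 :=
    fun x hx ↦ by
      have : m < x := by simp_all
      simp [min_eq_left (sub_nonneg.mpr this.le)]
  have h_below : EqOn (fun x ↦ β * exp (-β * x) * min 0 (x - m))
      (fun x ↦ β * exp (-β * x) * (x - m)) (Ioc 0 m) :=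
    fun x hx ↦ by simp [min_eq_right (sub_nonpos.mpr hx.2)]
  rw [setIntegral_eq_of_subset_of_forall_sdiff_eq_zero measurableSet_Ioi Ioc_subset_Ioi_self
      h_vanish, setIntegral_congr_fun measurableSet_Ioc h_below,
    ← intervalIntegral.integral_of_le hm,
    intervalIntegral.integral_eq_sub_of_hasDerivAt
      (f := fun x ↦ -exp (-β * x) * (x - m) - exp (-β * x) / β) (fun x _ ↦ ?_)
      ((by fun_prop : Continuous _).intervalIntegrable _ _)]
  · simp only [sub_self, mul_zero, exp_zero]
    field_simp
    ring
  · refine (((hasDerivAt_exp_neg_mul β x).neg.mul ((hasDerivAt_id x).sub_const m)).sub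
      ((hasDerivAt_exp_neg_mul β x).div_const β)).congr_deriv ?_
    simp only [Pi.neg_apply, id]
    field_simp
    ring

lemma integral_Ioi_exp_mul_one_sub_exp_div_sub_min {β δ X : ℝ} (hβ : β ≠ 0) (hδ : 0 < δ)
    (hβδ : β + δ ≠ 0) (hX : 0 ≤ X) :
    ∫ y in Ioi 0, δ * exp (-δ * y) * ((1 - exp (-β * min X y)) / β - min X y)
      = -(β / (δ * (β + δ))) + exp (-δ * X) / δ - exp (-(β + δ) * X) / (β + δ) := by
  rw [integral_Ioi_exp_mul_comp_min (g := fun m ↦ (1 - exp (-β * m)) / β - m) hδ hX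
      (by fun_prop),
    intervalIntegral.integral_eq_sub_of_hasDerivAt
      (f := fun y ↦ -exp (-δ * y) / β + δ * exp (-(β + δ) * y) / (β * (β + δ))
        + y * exp (-δ * y) + exp (-δ * y) / δ) (fun y _ ↦ ?_)
      ((by fun_prop : Continuous _).intervalIntegrable _ _)]
  · simp only [mul_zero, exp_zero, zero_mul, exp_add, show -(β + δ) * X = -β * X + -δ * X by ring]
    field_simp
    ring
  · refine (((((hasDerivAt_exp_neg_mul δ y).neg.div_const β).add
      (((hasDerivAt_exp_neg_mul (β + δ) y).const_mul δ).div_const (β * (β + δ)))).add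
      ((hasDerivAt_id y).mul (hasDerivAt_exp_neg_mul δ y))).add
      ((hasDerivAt_exp_neg_mul δ y).div_const δ)).congr_deriv ?_
    simp only [id, show -(β + δ) * y = -β * y + -δ * y by ring, exp_add]
    field_simp
    ring

lemma integrableOn_Ioi_prod_exp_mul_min_zero_sub_min {β δ : ℝ} (hβ : 0 < β) (hδ : 0 < δ)
    (X : ℝ) :
    IntegrableOn (fun p : ℝ × ℝ ↦ β * δ * exp (-β * p.1 - δ * p.2) * min 0 (p.1 - min X p.2))
      (Ioi 0 ×ˢ Ioi 0) := by
  have h_density : IntegrableOn (fun p : ℝ × ℝ ↦ β * δ * exp (-β * p.1 - δ * p.2))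
      (Ioi 0 ×ˢ Ioi 0) := by
    simp only [sub_eq_add_neg, exp_add, ← neg_mul, mul_assoc]
    rw [IntegrableOn, Measure.volume_eq_prod, ← Measure.prod_restrict]
    exact (((exp_neg_integrableOn_Ioi 0 hβ).mul_prod (exp_neg_integrableOn_Ioi 0 hδ)).const_mul
      δ).const_mul β
  refine h_density.mul_bdd (c := |X|) (by fun_prop) ?_
  filter_upwards [ae_restrict_mem (measurableSet_Ioi.prod measurableSet_Ioi)] with p hp
  have hx : 0 < p.1 := hp.1
  rw [norm_eq_abs, abs_of_nonpos (min_le_left _ _), neg_le]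
  exact le_min (neg_nonpos.mpr (abs_nonneg X))
    (by linarith [min_le_left X p.2, le_abs_self X])

theorem integral_Ioi_prod_exp_mul_min_zero_sub_min {β δ X : ℝ} (hβ : 0 < β) (hδ : 0 < δ)
    (hX : 0 ≤ X) :
    ∫ p in Ioi 0 ×ˢ Ioi 0, β * δ * exp (-β * p.1 - δ * p.2) * min 0 (p.1 - min X p.2)
      = -(β / (δ * (β + δ))) + exp (-δ * X) / δ - exp (-(β + δ) * X) / (β + δ) := by
  have hint := integrableOn_Ioi_prod_exp_mul_min_zero_sub_min hβ hδ X
  rw [Measure.volume_eq_prod] at hint ⊢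
  rw [← setIntegral_prod_swap]
  refine (setIntegral_prod _ hint.swap).trans ?_
  rw [← integral_Ioi_exp_mul_one_sub_exp_div_sub_min hβ.ne' hδ (add_pos hβ hδ).ne' hX]
  refine setIntegral_congr_fun measurableSet_Ioi fun y hy ↦ ?_
  have h_factor : ∀ x, β * δ * exp (-β * x - δ * y) * min 0 (x - min X y)
      = δ * exp (-δ * y) * (β * exp (-β * x) * min 0 (x - min X y)) := fun x ↦ by
    rw [sub_eq_add_neg, exp_add, ← neg_mul]; ring
  simp only [Function.comp_apply, Prod.swap_prod_mk, h_factor]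
  rw [integral_const_mul, integral_Ioi_exp_mul_min_zero_sub hβ.ne' (le_min hX (le_of_lt hy))]

/-- the expected downward jump
∫_{ℝ₊²} βδ e^{−βx−δy} min{0, x − min{X,y}} d(x,y) equals −β/(δ(β+δ)) + O(e^{−δX}) as X → ∞. -/
theorem stmt10 (β δ : ℝ) (hβ : 0 < β) (hδ : 0 < δ) :
    ∃ C > 0, ∀ X : ℝ, 0 ≤ X →
      |(∫ p in (Set.Ioi (0:ℝ)) ×ˢ (Set.Ioi (0:ℝ)),
          β * δ * Real.exp (-β * p.1 - δ * p.2) * min 0 (p.1 - min X p.2)) -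
        (-(β / (δ * (β + δ))))| ≤ C * Real.exp (-δ * X) := by
  refine ⟨1 / δ, one_div_pos.mpr hδ, fun X hX ↦ ?_⟩
  rw [integral_Ioi_prod_exp_mul_min_zero_sub_min hβ hδ hX, one_div_mul_eq_div,
    show ∀ a b c : ℝ, -a + b - c - -a = b - c by intros; ring]
  have h_decay : exp (-(β + δ) * X) / (β + δ) ≤ exp (-δ * X) / δ := by
    gcongr <;> linarith
  exact abs_sub_le_of_nonneg_of_le (by positivity) le_rfl (by positivity) h_decay
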